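/- arXiv:2403.17613 — 2 statements merged into one kernel-verified Lean document; each statement's English description precedes it below -/
import Mathlib

section
/- Let g, s ∈ R^n with g ≠ 0, B ∈ R^{n×n} symmetric with η1 I ⪯ B ⪯ η2 I for 0 < η1 ≤ η2, P = [−g s], u = (α, β) a solution of Pᵀ B P u = −Pᵀ g, and d = −α g + β s. Then gᵀ d ≤ −(η1/η2²)‖g‖². -/
/-!
The normal equations say that the residual `B d + g` is orthogonal to the columns of `P`; testing
against `d` and against `g` (both in the column span) gives `dᵀ B d = -gᵀ d` and `gᵀ B d = -‖g‖²`.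
Cauchy–Schwarz for the form of `B` then gives `‖g‖⁴ ≤ (gᵀ B g)(dᵀ B d) ≤ η₂² ‖g‖² ‖d‖²`, i.e.
`‖g‖ ≤ η₂ ‖d‖`, and `gᵀ d = -dᵀ B d ≤ -η₁ ‖d‖² ≤ -(η₁/η₂²) ‖g‖²`.
-/

open Matrix

theorem dotProduct_self_nonneg {ι : Type*} [Fintype ι] (v : ι → ℝ) : 0 ≤ v ⬝ᵥ v := by
  simpa using dotProduct_star_self_nonneg v

theorem Matrix.IsSymm.dotProduct_mulVec_sq_le {R ι : Type*} [CommRing R] [LinearOrder R]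
    [IsStrictOrderedRing R] [Fintype ι] {B : Matrix ι ι R} (hB : B.IsSymm)
    (hpos : ∀ x, 0 ≤ x ⬝ᵥ B *ᵥ x) (x y : ι → R) :
    (x ⬝ᵥ B *ᵥ y) ^ 2 ≤ (x ⬝ᵥ B *ᵥ x) * (y ⬝ᵥ B *ᵥ y) := by
  classical
  simpa only [Matrix.toBilin'_apply'] using (Matrix.toBilin' B).apply_sq_le_of_symm
    (by simpa only [Matrix.toBilin'_apply'] using hpos)
    (LinearMap.BilinForm.isSymm_iff.mp (isSymm_toBilin'_iff_isSymm.mpr hB)) x y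

theorem Matrix.mulVec_dotProduct_mulVec_eq_neg_of_normal_eq {R ι κ : Type*} [CommRing R]
    [Fintype ι] [Fintype κ] {B : Matrix ι ι R} {P : Matrix ι κ R} {u : κ → R} {g : ι → R}
    (hu : (Pᵀ * B * P) *ᵥ u = -(Pᵀ *ᵥ g)) (w : κ → R) :
    P *ᵥ w ⬝ᵥ B *ᵥ (P *ᵥ u) = -(P *ᵥ w ⬝ᵥ g) := by
  have hadj (v : ι → R) : P *ᵥ w ⬝ᵥ v = w ⬝ᵥ Pᵀ *ᵥ v := by
    rw [dotProduct_mulVec, vecMul_transpose]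
  rw [hadj, hadj, mulVec_mulVec, mulVec_mulVec, hu, dotProduct_neg]

theorem Matrix.dotProduct_self_le_sq_mul_of_dotProduct_mulVec_eq_neg {ι : Type*} [Fintype ι]
    {B : Matrix ι ι ℝ} (hB : B.IsSymm) (hpos : ∀ x, 0 ≤ x ⬝ᵥ B *ᵥ x) {η : ℝ}
    (hle : ∀ x, x ⬝ᵥ B *ᵥ x ≤ η * (x ⬝ᵥ x)) {g d : ι → ℝ} (h : g ⬝ᵥ B *ᵥ d = -(g ⬝ᵥ g)) :
    g ⬝ᵥ g ≤ η ^ 2 * (d ⬝ᵥ d) := by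
  have hcs : (g ⬝ᵥ g) * (g ⬝ᵥ g) ≤ (g ⬝ᵥ g) * (η ^ 2 * (d ⬝ᵥ d)) :=
    calc (g ⬝ᵥ g) * (g ⬝ᵥ g) = (g ⬝ᵥ B *ᵥ d) ^ 2 := by rw [h]; ring
      _ ≤ (g ⬝ᵥ B *ᵥ g) * (d ⬝ᵥ B *ᵥ d) := hB.dotProduct_mulVec_sq_le hpos g d
      _ ≤ (η * (g ⬝ᵥ g)) * (η * (d ⬝ᵥ d)) :=
        mul_le_mul (hle g) (hle d) (hpos d) ((hpos g).trans (hle g))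
      _ = (g ⬝ᵥ g) * (η ^ 2 * (d ⬝ᵥ d)) := by ring
  rcases (dotProduct_self_nonneg g).lt_or_eq with hg | hg
  · exact le_of_mul_le_mul_left hcs hg
  · rw [← hg]
    exact mul_nonneg (sq_nonneg η) (dotProduct_self_nonneg d)

theorem div_sq_mul_le_mul_of_le_sq_mul {a b c η : ℝ} (ha : 0 ≤ a) (hc : 0 ≤ c)
    (h : b ≤ η ^ 2 * c) : a / η ^ 2 * b ≤ a * c := by
  rcases eq_or_ne η 0 with rfl | hη
  · simpa using mul_nonneg ha hc
  · calc a / η ^ 2 * b ≤ a / η ^ 2 * (η ^ 2 * c) := by gcongr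
      _ = a * c := by field_simp

theorem sufficient_descent_general
    (n : ℕ) (g s : Fin n → ℝ)
    (η₁ η₂ : ℝ) (hη₁ : 0 < η₁)
    (B : Matrix (Fin n) (Fin n) ℝ) (hBsymm : B.IsSymm)
    (hB : ∀ x : Fin n → ℝ, η₁ * (x ⬝ᵥ x) ≤ x ⬝ᵥ (B *ᵥ x) ∧ x ⬝ᵥ (B *ᵥ x) ≤ η₂ * (x ⬝ᵥ x))
    (P : Matrix (Fin n) (Fin 2) ℝ) (hP : P = Matrix.of fun i => ![-g i, s i])
    (α β : ℝ) (hu : (Pᵀ * B * P) *ᵥ ![α, β] = -(Pᵀ *ᵥ g))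
    (d : Fin n → ℝ) (hd : d = (-α) • g + β • s) :
    g ⬝ᵥ d ≤ -(η₁/η₂^2) * (g ⬝ᵥ g) := by
  have hPu : P *ᵥ ![α, β] = d := by
    ext i
    simp only [hP, hd, mulVec, dotProduct, of_apply, Fin.sum_univ_two, cons_val_zero,
      cons_val_one, cons_val_fin_one, Pi.add_apply, Pi.smul_apply, smul_eq_mul]
    ring
  have hPe : P *ᵥ ![-1, 0] = g := by
    ext i
    simp [hP, mulVec, dotProduct, Fin.sum_univ_two]
  have hpos (x : Fin n → ℝ) : 0 ≤ x ⬝ᵥ B *ᵥ x :=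
    (mul_nonneg hη₁.le (dotProduct_self_nonneg x)).trans (hB x).1
  have hdBd : d ⬝ᵥ B *ᵥ d = -(d ⬝ᵥ g) := by
    simpa only [hPu] using mulVec_dotProduct_mulVec_eq_neg_of_normal_eq hu ![α, β]
  have hgBd : g ⬝ᵥ B *ᵥ d = -(g ⬝ᵥ g) := by
    simpa only [hPu, hPe] using mulVec_dotProduct_mulVec_eq_neg_of_normal_eq hu ![-1, 0]
  have hgd : g ⬝ᵥ g ≤ η₂ ^ 2 * (d ⬝ᵥ d) :=
    dotProduct_self_le_sq_mul_of_dotProduct_mulVec_eq_neg hBsymm hpos (fun x => (hB x).2) hgBd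
  calc g ⬝ᵥ d = -(d ⬝ᵥ B *ᵥ d) := by rw [hdBd, dotProduct_comm, neg_neg]
    _ ≤ -(η₁ * (d ⬝ᵥ d)) := neg_le_neg (hB d).1
    _ ≤ -(η₁ / η₂ ^ 2) * (g ⬝ᵥ g) := by
      rw [neg_mul, neg_le_neg_iff]
      exact div_sq_mul_le_mul_of_le_sq_mul hη₁.le (dotProduct_self_nonneg d) hgd

theorem sufficient_descent
    (n : ℕ) (g s : Fin n → ℝ) (hg : g ≠ 0)
    (η₁ η₂ : ℝ) (hη₁ : 0 < η₁) (hη : η₁ ≤ η₂)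
    (B : Matrix (Fin n) (Fin n) ℝ) (hBsymm : B.IsSymm)
    (hB : ∀ x : Fin n → ℝ, η₁ * (x ⬝ᵥ x) ≤ x ⬝ᵥ (B *ᵥ x) ∧ x ⬝ᵥ (B *ᵥ x) ≤ η₂ * (x ⬝ᵥ x))
    (P : Matrix (Fin n) (Fin 2) ℝ) (hP : P = Matrix.of fun i => ![-g i, s i])
    (α β : ℝ) (hu : (Pᵀ * B * P) *ᵥ ![α, β] = -(Pᵀ *ᵥ g))
    (d : Fin n → ℝ) (hd : d = (-α) • g + β • s) :
    g ⬝ᵥ d ≤ -(η₁/η₂^2) * (g ⬝ᵥ g) :=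
  sufficient_descent_general n g s η₁ η₂ hη₁ B hBsymm hB P hP α β hu d hd
end

section
/- In the same setting (g, s nonzero, D = diag(‖g‖,‖s‖), H symmetric 2×2 with c1 I ⪯ D⁻¹HD⁻¹ ⪯ c2 I, (α,β) solving H(α,β)ᵀ = (‖g‖², −gᵀs)ᵀ, d = −αg + βs), one has ‖d‖ ≥ (1/c2)‖g‖. -/
open Matrix

private lemma dot_self_nonneg' {m : ℕ} (v : Fin m → ℝ) : 0 ≤ v ⬝ᵥ v :=
  Finset.sum_nonneg fun i _ => mul_self_nonneg _

private lemma dot_self_pos' {m : ℕ} {v : Fin m → ℝ} (hv : v ≠ 0) : 0 < v ⬝ᵥ v :=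
  (dot_self_nonneg' v).lt_of_ne' (fun h => hv (dotProduct_self_eq_zero.mp h))

theorem scaled_norm_lower_bound
    (n : ℕ) (g s : Fin n → ℝ) (hg : g ≠ 0) (hs : s ≠ 0)
    (c₁ c₂ : ℝ) (hc₁ : 0 < c₁) (hc : c₁ ≤ c₂)
    (D : Matrix (Fin 2) (Fin 2) ℝ)
    (hD : D = Matrix.diagonal ![Real.sqrt (g ⬝ᵥ g), Real.sqrt (s ⬝ᵥ s)])
    (H : Matrix (Fin 2) (Fin 2) ℝ) (hHsymm : H.IsSymm)
    (hH : ∀ x : Fin 2 → ℝ, c₁ * (x ⬝ᵥ x) ≤ x ⬝ᵥ ((D⁻¹ * H * D⁻¹) *ᵥ x) ∧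
      x ⬝ᵥ ((D⁻¹ * H * D⁻¹) *ᵥ x) ≤ c₂ * (x ⬝ᵥ x))
    (α β : ℝ) (hαβ : H *ᵥ ![α, β] = ![g ⬝ᵥ g, -(g ⬝ᵥ s)])
    (d : Fin n → ℝ) (hd : d = (-α) • g + β • s) :
    Real.sqrt (d ⬝ᵥ d) ≥ (1/c₂) * Real.sqrt (g ⬝ᵥ g) := by
  have hgg : 0 < g ⬝ᵥ g := dot_self_pos' hg
  have hss : 0 < s ⬝ᵥ s := dot_self_pos' hs
  set a := Real.sqrt (g ⬝ᵥ g) with ha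
  set b := Real.sqrt (s ⬝ᵥ s) with hb
  have hapos : 0 < a := Real.sqrt_pos.mpr hgg
  have hbpos : 0 < b := Real.sqrt_pos.mpr hss
  have ha2 : a * a = g ⬝ᵥ g := Real.mul_self_sqrt hgg.le
  have hb2 : b * b = s ⬝ᵥ s := Real.mul_self_sqrt hss.le
  -- inverse of D
  have hDinv : D⁻¹ = Matrix.diagonal ![a⁻¹, b⁻¹] := by
    apply Matrix.inv_eq_right_inv
    rw [hD]
    ext i j
    fin_cases i <;> fin_cases j <;>
      simp [Matrix.mul_apply, Fin.sum_univ_two, Matrix.diagonal, Matrix.one_apply,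
        mul_inv_cancel₀ hapos.ne', mul_inv_cancel₀ hbpos.ne']
  set M := D⁻¹ * H * D⁻¹ with hM
  set y : Fin 2 → ℝ := ![a * α, b * β] with hy
  have hDy : D⁻¹ *ᵥ y = ![α, β] := by
    rw [hDinv]
    funext i; fin_cases i <;>
      simp [mulVec_diagonal, hy, ← mul_assoc, inv_mul_cancel₀ hapos.ne', inv_mul_cancel₀ hbpos.ne']
  set gs := g ⬝ᵥ s with hgs
  have hMy : M *ᵥ y = ![a, -gs / b] := by
    rw [hM, ← mulVec_mulVec, ← mulVec_mulVec, hDy, hαβ, hDinv]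
    funext i; fin_cases i <;> simp [mulVec_diagonal]
    · rw [← ha2, inv_mul_eq_div, mul_div_assoc, div_self hapos.ne', mul_one]
    · ring
  -- quadratic form value at y
  have hqy : y ⬝ᵥ (M *ᵥ y) = (g ⬝ᵥ g) * α - gs * β := by
    rw [hMy]
    show a * α * a + (b * β * (-gs / b) + 0) = _
    have hbb : b * β * (-gs / b) = -(gs * β) := by field_simp
    rw [hbb, ← ha2]; ring
  -- symmetry of M
  have hMsymm : Mᵀ = M := by
    rw [hM, transpose_mul, transpose_mul, transpose_nonsing_inv, hD, diagonal_transpose,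
      hHsymm.eq, ← hD]
    exact (mul_assoc _ _ _).symm
  have hsymm : ∀ u w : Fin 2 → ℝ, u ⬝ᵥ (M *ᵥ w) = w ⬝ᵥ (M *ᵥ u) := by
    intro u w
    rw [dotProduct_mulVec, ← mulVec_transpose, hMsymm, dotProduct_comm]
  -- e1
  set e₁ : Fin 2 → ℝ := ![1, 0] with he₁
  have hBe₁y : e₁ ⬝ᵥ (M *ᵥ y) = a := by
    rw [hMy]; simp [dotProduct, Fin.sum_univ_two, he₁]
  have hqe₁ : e₁ ⬝ᵥ (M *ᵥ e₁) ≤ c₂ := by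
    have h := (hH e₁).2
    have : e₁ ⬝ᵥ e₁ = 1 := by simp [dotProduct, Fin.sum_univ_two, he₁]
    rw [this, mul_one] at h; exact h
  have hqe₁0 : 0 ≤ e₁ ⬝ᵥ (M *ᵥ e₁) :=
    le_trans (mul_nonneg hc₁.le (dot_self_nonneg' e₁)) (hH e₁).1
  have hqypos : 0 < y ⬝ᵥ (M *ᵥ y) := by
    have hy0 : y ≠ 0 := by
      intro h0
      have h1 : M *ᵥ y = 0 := by rw [h0]; simp
      rw [hMy] at h1
      have h2 := congrFun h1 0
      simp at h2
      exact hapos.ne' h2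
    exact lt_of_lt_of_le (mul_pos hc₁ (dot_self_pos' hy0)) (hH y).1
  -- Cauchy-Schwarz for the form M : a^2 ≤ qe₁ * qy
  have hCS : a * a ≤ (e₁ ⬝ᵥ (M *ᵥ e₁)) * (y ⬝ᵥ (M *ᵥ y)) := by
    set qy := y ⬝ᵥ (M *ᵥ y) with hqydef
    set x : Fin 2 → ℝ := qy • e₁ + (-a) • y with hx
    have hx0 : 0 ≤ x ⬝ᵥ (M *ᵥ x) :=
      le_trans (mul_nonneg hc₁.le (dot_self_nonneg' x)) (hH x).1
    have hexp : x ⬝ᵥ (M *ᵥ x) =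
        qy * qy * (e₁ ⬝ᵥ (M *ᵥ e₁)) - 2 * a * qy * (e₁ ⬝ᵥ (M *ᵥ y)) + a * a * qy := by
      rw [hx]
      rw [mulVec_add, mulVec_smul, mulVec_smul]
      rw [add_dotProduct, smul_dotProduct, smul_dotProduct]
      rw [dotProduct_add, dotProduct_add, dotProduct_smul, dotProduct_smul,
        dotProduct_smul, dotProduct_smul]
      rw [hsymm y e₁]
      show qy * (qy * (e₁ ⬝ᵥ (M *ᵥ e₁)) + -a * (e₁ ⬝ᵥ (M *ᵥ y))) +
        -a * (qy * (e₁ ⬝ᵥ (M *ᵥ y)) + -a * qy) = _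
      ring
    rw [hexp, hBe₁y] at hx0
    nlinarith [hqypos]
  have key : a * a ≤ c₂ * (y ⬝ᵥ (M *ᵥ y)) :=
    le_trans hCS (by nlinarith [hqypos, hqe₁])
  -- relate qy to g ⬝ᵥ d
  have hgd : g ⬝ᵥ d = -(y ⬝ᵥ (M *ᵥ y)) := by
    rw [hqy, hd, dotProduct_add, dotProduct_smul, dotProduct_smul, ← hgs,
      smul_eq_mul, smul_eq_mul]
    ring
  -- Cauchy-Schwarz in ℝⁿ
  have hCSn : (g ⬝ᵥ d)^2 ≤ (g ⬝ᵥ g) * (d ⬝ᵥ d) := by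
    have h := Finset.sum_mul_sq_le_sq_mul_sq Finset.univ g d
    simpa [dotProduct, sq] using h
  have hdd : 0 ≤ d ⬝ᵥ d := dot_self_nonneg' d
  have hsd : Real.sqrt (d ⬝ᵥ d) * Real.sqrt (d ⬝ᵥ d) = d ⬝ᵥ d := Real.mul_self_sqrt hdd
  have hc₂ : 0 < c₂ := lt_of_lt_of_le hc₁ hc
  set sd := Real.sqrt (d ⬝ᵥ d) with hsddef
  have hsdnn : 0 ≤ sd := Real.sqrt_nonneg _
  -- qy ≤ a * sd
  have hsq : (y ⬝ᵥ (M *ᵥ y))^2 ≤ (a * sd)^2 := by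
    have : (y ⬝ᵥ (M *ᵥ y))^2 = (g ⬝ᵥ d)^2 := by rw [hgd]; ring
    rw [this]
    calc (g ⬝ᵥ d)^2 ≤ (g ⬝ᵥ g) * (d ⬝ᵥ d) := hCSn
    _ = (a * sd)^2 := by rw [← ha2, ← hsd]; ring
  have hfin : y ⬝ᵥ (M *ᵥ y) ≤ a * sd := by
    have h1 := Real.sqrt_le_sqrt hsq
    rwa [Real.sqrt_sq hqypos.le, Real.sqrt_sq (mul_nonneg hapos.le hsdnn)] at h1
  rw [ge_iff_le, div_mul_eq_mul_div, one_mul, div_le_iff₀ hc₂]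
  nlinarith [key, hfin, hapos]
end
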